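/- For any two antisymmetric real 4×4 matrices A and B, the identity (1/8)·(tr(A B))² − (1/4)·tr(A B A B) = Pf(A) · Pf(B) holds, where the products are matrix products. (In the paper's notation with A = F_{μν} and B = θ̄^{μν}: (1/8)(Fθ̄)(Fθ̄) − (1/4)(Fθ̄Fθ̄) = Pfaff(F_{μν}) Pfaff(θ̄^{μν}).) -/
import Mathlib
set_option maxRecDepth 10000

open Matrix

/-- The Pfaffian of a real antisymmetric 4×4 matrix. -/
def pfaffian4 (M : Matrix (Fin 4) (Fin 4) ℝ) : ℝ :=
  M 0 1 * M 2 3 - M 0 2 * M 1 3 + M 0 3 * M 1 2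

/-- For antisymmetric real 4×4 matrices `A`, `B`:
`(1/8)·(tr(AB))² − (1/4)·tr(ABAB) = Pf(A)·Pf(B)`. -/
theorem pfaffian_trace_identity
    (A B : Matrix (Fin 4) (Fin 4) ℝ)
    (hA : Aᵀ = -A) (hB : Bᵀ = -B) :
    (1 / 8) * ((A * B).trace) ^ 2 - (1 / 4) * (A * B * A * B).trace =
      pfaffian4 A * pfaffian4 B := by
  have ha : ∀ i j, A j i = -A i j := fun i j => by
    have := congrFun (congrFun hA i) j
    simpa [Matrix.transpose_apply] using this
  have hb : ∀ i j, B j i = -B i j := fun i j => by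
    have := congrFun (congrFun hB i) j
    simpa [Matrix.transpose_apply] using this
  have ha0 : A 0 0 = 0 := by have := ha 0 0; linarith
  have ha1 : A 1 1 = 0 := by have := ha 1 1; linarith
  have ha2 : A 2 2 = 0 := by have := ha 2 2; linarith
  have ha3 : A 3 3 = 0 := by have := ha 3 3; linarith
  have hb0 : B 0 0 = 0 := by have := hb 0 0; linarith
  have hb1 : B 1 1 = 0 := by have := hb 1 1; linarith
  have hb2 : B 2 2 = 0 := by have := hb 2 2; linarith
  have hb3 : B 3 3 = 0 := by have := hb 3 3; linarith
  simp only [Matrix.trace, Matrix.mul_apply, Matrix.diag, Fin.sum_univ_four, pfaffian4,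
    ha 0 1, ha 0 2, ha 0 3, ha 1 2, ha 1 3, ha 2 3,
    hb 0 1, hb 0 2, hb 0 3, hb 1 2, hb 1 3, hb 2 3,
    ha0, ha1, ha2, ha3, hb0, hb1, hb2, hb3]
  ring
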